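/- Let n ≥ 2 and let ℓ : ℝ → [0,∞) be measurable such that F_ℓ is a set of finite perimeter and finite volume in ℝⁿ. Fix z̄ ∈ ℝ and w ∈ ℝ^{n-1} with |w| > r_ℓ^∨(z̄). Then (z̄,w) is a point of density 0 of F_ℓ, i.e. lim_{ρ→0⁺} ℋ^n(F_ℓ ∩ B_ρ((z̄,w)))/(ω_n ρⁿ) = 0. -/

import Mathlib

open MeasureTheory Metric Set Filter
open scoped ENNReal NNReal Topology RealInnerProductSpace symmDiff

noncomputable section

namespace Schwarz

/-- The point `(z, w) ∈ ℝ × ℝ^m ≅ ℝ^(m+1)`. -/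
def mk' {m : ℕ} (z : ℝ) (w : EuclideanSpace ℝ (Fin m)) : EuclideanSpace ℝ (Fin (m + 1)) :=
  (WithLp.equiv 2 (Fin (m + 1) → ℝ)).symm (Fin.cons z ((WithLp.equiv 2 (Fin m → ℝ)) w))

/-- The `w`-component of a point of `ℝ^(m+1) ≅ ℝ × ℝ^m`. -/
def tailv {m : ℕ} (x : EuclideanSpace ℝ (Fin (m + 1))) : EuclideanSpace ℝ (Fin m) :=
  (WithLp.equiv 2 (Fin m → ℝ)).symm (fun i => x i.succ)

/-- The slice of a subset of `ℝ^(m+1)` at height `z`. -/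
def slice {m : ℕ} (A : Set (EuclideanSpace ℝ (Fin (m + 1)))) (z : ℝ) :
    Set (EuclideanSpace ℝ (Fin m)) := {w | mk' z w ∈ A}

/-- `ω_d`, the Lebesgue measure of the unit ball of `ℝ^d`. -/
def ballVol (d : ℕ) : ℝ≥0∞ := volume (ball (0 : EuclideanSpace ℝ (Fin d)) 1)

/-- `A ⊆ ℝ^(m+1)` is `ℓ`-distributed: a.e. slice has measure `ℓ z`. -/
def IsDistributed (m : ℕ) (ℓ : ℝ → ℝ) (A : Set (EuclideanSpace ℝ (Fin (m + 1)))) : Prop :=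
  ∀ᵐ z ∂(volume : Measure ℝ), volume (slice A z) = ENNReal.ofReal (ℓ z)

/-- The radius `r_ℓ(z) = (ℓ z / ω_m)^(1/m)`. -/
def rad (m : ℕ) (ℓ : ℝ → ℝ) (z : ℝ) : ℝ := (ℓ z / (ballVol m).toReal) ^ ((1 : ℝ) / m)

/-- The Schwarz symmetric set `F_ℓ`. -/
def F (m : ℕ) (ℓ : ℝ → ℝ) : Set (EuclideanSpace ℝ (Fin (m + 1))) :=
  {x | ‖tailv x‖ < rad m ℓ (x 0)}

/-- The density of `A` at `x` equals `s` (balls of volume `ω_d ρ^d`). -/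
def DensAt {d : ℕ} (A : Set (EuclideanSpace ℝ (Fin d))) (x : EuclideanSpace ℝ (Fin d))
    (s : ℝ≥0∞) : Prop :=
  Tendsto (fun ρ : ℝ => volume (A ∩ ball x ρ) / (ballVol d * ENNReal.ofReal (ρ ^ d)))
    (𝓝[>] 0) (𝓝 s)

/-- The essential (measure-theoretic) boundary: where the density is neither 0 nor 1.
By Federer's theorem it agrees with the reduced boundary up to `ℋ^(d-1)`-null sets. -/
def essBoundary {d : ℕ} (A : Set (EuclideanSpace ℝ (Fin d))) :
    Set (EuclideanSpace ℝ (Fin d)) :=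
  {x | ¬ DensAt A x 0 ∧ ¬ DensAt A x 1}

/-- Relative perimeter `P(A; G) = ℋ^(d-1)(G ∩ ∂*A)`. -/
def perim {d : ℕ} (A G : Set (EuclideanSpace ℝ (Fin d))) : ℝ≥0∞ :=
  μH[(d : ℝ) - 1] (G ∩ essBoundary A)

/-- A set of finite perimeter (via Federer's criterion). -/
def HasFinPerim {d : ℕ} (A : Set (EuclideanSpace ℝ (Fin d))) : Prop :=
  MeasurableSet A ∧ perim A univ < ⊤

/-- Translation of a subset of `ℝ^(m+1)` by the horizontal vector `(0, τ)`. -/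
def vtrans {m : ℕ} (τ : EuclideanSpace ℝ (Fin m)) (A : Set (EuclideanSpace ℝ (Fin (m + 1)))) :
    Set (EuclideanSpace ℝ (Fin (m + 1))) := (fun x => x + mk' 0 τ) '' A

/-- One-dimensional density of `A ⊆ ℝ` at `x` equals `s`. -/
def DensAtR (A : Set ℝ) (x : ℝ) (s : ℝ≥0∞) : Prop :=
  Tendsto (fun ρ : ℝ => volume (A ∩ ball x ρ) / ENNReal.ofReal (2 * ρ)) (𝓝[>] 0) (𝓝 s)

/-- Approximate lower limit `g^∧(x)`. -/
def approxLower (g : ℝ → ℝ) (x : ℝ) : EReal :=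
  sSup ((fun s : ℝ => (s : EReal)) '' {s : ℝ | DensAtR {y | g y < s} x 0})

/-- Approximate upper limit `g^∨(x)`. -/
def approxUpper (g : ℝ → ℝ) (x : ℝ) : EReal :=
  sInf ((fun s : ℝ => (s : EReal)) '' {s : ℝ | DensAtR {y | s < g y} x 0})

/-- Divergence of a vector field on `ℝ^d`. -/
def divg {d : ℕ} (T : EuclideanSpace ℝ (Fin d) → EuclideanSpace ℝ (Fin d))
    (x : EuclideanSpace ℝ (Fin d)) : ℝ :=
  ∑ i, fderiv ℝ T x (EuclideanSpace.single i 1) i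

/-- `ν` is a measure-theoretic outer unit normal of `A`: the generalised Gauss–Green
formula holds on the (essential = reduced, up to `ℋ^(d-1)`-null sets) boundary. -/
def IsGGNormal {d : ℕ} (A : Set (EuclideanSpace ℝ (Fin d)))
    (ν : EuclideanSpace ℝ (Fin d) → EuclideanSpace ℝ (Fin d)) : Prop :=
  (∀ x ∈ essBoundary A, ‖ν x‖ = 1) ∧
  ∀ T : EuclideanSpace ℝ (Fin d) → EuclideanSpace ℝ (Fin d),
    ContDiff ℝ 1 T → HasCompactSupport T →
      ∫ x in A, divg T x = ∫ x in essBoundary A, ⟪T x, ν x⟫ ∂(μH[(d : ℝ) - 1])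

/-- `g ∈ W^{1,1}(Ω)`: `g` is integrable on `Ω` with integrable distributional derivative. -/
def MemW11 (g : ℝ → ℝ) (Ω : Set ℝ) : Prop :=
  IntegrableOn g Ω ∧ ∃ g' : ℝ → ℝ, IntegrableOn g' Ω ∧
    ∀ φ : ℝ → ℝ, ContDiff ℝ 1 φ → HasCompactSupport φ → tsupport φ ⊆ Ω →
      ∫ z in Ω, g z * deriv φ z = - ∫ z in Ω, g' z * φ z

/-- Rigidity for the perimeter inequality under Schwarz symmetrisation: every equality
case is a horizontal translate of `F_ℓ`. -/
def Rigidity (m : ℕ) (ℓ : ℝ → ℝ) : Prop :=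
  ∀ A : Set (EuclideanSpace ℝ (Fin (m + 1))), MeasurableSet A → IsDistributed m ℓ A →
    perim A univ = perim (F m ℓ) univ →
    ∃ τ : EuclideanSpace ℝ (Fin m), volume (A ∆ vtrans τ (F m ℓ)) = 0

/-- A decomposition `Dℓ = g dx + ε dσ` of the distributional derivative of `ℓ`:
`g = ∇ℓ` is the absolutely continuous density, `σ = |D^s ℓ|` and `ε` the sign of the
singular part. -/
def IsDerivDecomp (ℓ g ε : ℝ → ℝ) (σ : Measure ℝ) : Prop :=
  Integrable g ∧ σ ⟂ₘ (volume : Measure ℝ) ∧ IsFiniteMeasure σ ∧ (∀ᵐ x ∂σ, |ε x| = 1) ∧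
    ∀ φ : ℝ → ℝ, ContDiff ℝ 1 φ → HasCompactSupport φ →
      ∫ x, ℓ x * deriv φ x = -(∫ x, φ x * g x) - ∫ x, φ x * ε x ∂σ

/-- Bounded variation on `ℝ` via the variational definition. -/
def HasBddVariation (g : ℝ → ℝ) : Prop :=
  ∃ C : ℝ, ∀ T : ℝ → ℝ, ContDiff ℝ 1 T → HasCompactSupport T → (∀ x, |T x| ≤ 1) →
    ∫ x, g x * deriv T x ≤ C

/-!
Pick a real `s` with `r_ℓ^∨(z̄) < s < |w|`, so that `{r_ℓ > s}` has one-dimensional density `0`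
at `z̄`. For `ρ < |w| - s`, every point `(z, v)` of `F_ℓ ∩ B_ρ((z̄, w))` has `r_ℓ(z) > |v| > s`, so
`F_ℓ ∩ B_ρ((z̄, w))` lies in the cylinder `({r_ℓ > s} ∩ (z̄ - ρ, z̄ + ρ)) × B_ρ(w)`. Its volume is
`ω_{n-1} ρ^{n-1} · |{r_ℓ > s} ∩ (z̄ - ρ, z̄ + ρ)| = o(ρⁿ)`.
-/

def headTail (m : ℕ) : EuclideanSpace ℝ (Fin (m + 1)) ≃ᵐ ℝ × EuclideanSpace ℝ (Fin m) :=
  (MeasurableEquiv.toLp 2 (Fin (m + 1) → ℝ)).symm.trans <|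
    (MeasurableEquiv.piFinSuccAbove (fun _ => ℝ) 0).trans <|
      MeasurableEquiv.prodCongr (MeasurableEquiv.refl ℝ) (MeasurableEquiv.toLp 2 (Fin m → ℝ))

@[simp]
lemma headTail_apply {m : ℕ} (x : EuclideanSpace ℝ (Fin (m + 1))) :
    headTail m x = (x 0, tailv x) :=
  rfl

lemma measurePreserving_headTail (m : ℕ) :
    MeasurePreserving (headTail m) volume (volume.prod volume) :=
  (EuclideanSpace.volume_preserving_symm_measurableEquiv_toLp (Fin (m + 1))).trans <|
    (volume_preserving_piFinSuccAbove (fun _ => ℝ) 0).trans <|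
      (MeasurePreserving.id volume).prod (PiLp.volume_preserving_toLp (Fin m))

lemma norm_sq_eq_sq_add_norm_tailv_sq {m : ℕ} (x : EuclideanSpace ℝ (Fin (m + 1))) :
    ‖x‖ ^ 2 = x 0 ^ 2 + ‖tailv x‖ ^ 2 := by
  simp only [EuclideanSpace.norm_sq_eq, Fin.sum_univ_succ, Real.norm_eq_abs, sq_abs]
  rfl

lemma norm_tailv_le {m : ℕ} (x : EuclideanSpace ℝ (Fin (m + 1))) : ‖tailv x‖ ≤ ‖x‖ := by
  have := norm_sq_eq_sq_add_norm_tailv_sq x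
  nlinarith [norm_nonneg x, norm_nonneg (tailv x), sq_nonneg (x 0)]

lemma tailv_sub {m : ℕ} (x y : EuclideanSpace ℝ (Fin (m + 1))) :
    tailv (x - y) = tailv x - tailv y := rfl

lemma tailv_mk' {m : ℕ} (z : ℝ) (w : EuclideanSpace ℝ (Fin m)) : tailv (mk' z w) = w := by
  ext i; simp [tailv, mk']

lemma mul_ballVol_div_ballVol_succ_eq (m : ℕ) (A : ℝ≥0∞) {ρ : ℝ} (hρ : 0 < ρ) :
    A * (ENNReal.ofReal (ρ ^ m) * ballVol m) / (ballVol (m + 1) * ENNReal.ofReal (ρ ^ (m + 1)))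
      = A / ENNReal.ofReal (2 * ρ) * (2 * ballVol m / ballVol (m + 1)) := by
  rw [pow_succ, ENNReal.ofReal_mul (by positivity), ENNReal.ofReal_mul (by norm_num),
    ENNReal.ofReal_ofNat]
  have hP : ENNReal.ofReal (ρ ^ m) ≠ 0 := (ENNReal.ofReal_pos.2 (pow_pos hρ m)).ne'
  have hr : ENNReal.ofReal ρ ≠ 0 := (ENNReal.ofReal_pos.2 hρ).ne'
  have hC : ballVol (m + 1) ≠ 0 := (measure_ball_pos volume 0 one_pos).ne'
  simp only [div_eq_mul_inv, ENNReal.mul_inv (Or.inl hC) (Or.inr (mul_ne_zero hP hr)),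
    ENNReal.mul_inv (Or.inl hP) (Or.inl ENNReal.ofReal_ne_top),
    ENNReal.mul_inv (Or.inl two_ne_zero) (Or.inl ENNReal.ofNat_ne_top)]
  calc _ = A * (ballVol (m + 1))⁻¹ * (ENNReal.ofReal ρ)⁻¹ * ballVol m *
        (ENNReal.ofReal (ρ ^ m) * (ENNReal.ofReal (ρ ^ m))⁻¹) := by ring
    _ = A * (ballVol (m + 1))⁻¹ * (ENNReal.ofReal ρ)⁻¹ * ballVol m * (2 * 2⁻¹) := by
      rw [ENNReal.mul_inv_cancel hP ENNReal.ofReal_ne_top,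
        ENNReal.mul_inv_cancel two_ne_zero ENNReal.ofNat_ne_top]
    _ = _ := by ring

lemma ball_mk'_subset_preimage_headTail {m : ℕ} (z : ℝ) (w : EuclideanSpace ℝ (Fin m))
    (ρ : ℝ) :
    ball (mk' z w) ρ ⊆ headTail m ⁻¹' (ball z ρ ×ˢ ball w ρ) := by
  intro x hx
  rw [mem_ball, dist_eq_norm] at hx
  refine ⟨?_, ?_⟩
  · rw [mem_ball, Real.dist_eq]
    exact (PiLp.norm_apply_le (x - mk' z w) 0).trans_lt hx
  · rw [mem_ball, dist_eq_norm, headTail_apply, ← tailv_mk' z w, ← tailv_sub]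
    exact (norm_tailv_le _).trans_lt hx

lemma volume_inter_ball_mk'_le {m : ℕ} {A : Set (EuclideanSpace ℝ (Fin (m + 1)))} {Z : Set ℝ}
    {z : ℝ} {w : EuclideanSpace ℝ (Fin m)} {ρ : ℝ} (hρ : 0 < ρ)
    (hAZ : A ∩ ball (mk' z w) ρ ⊆ {x | x 0 ∈ Z}) :
    volume (A ∩ ball (mk' z w) ρ) ≤
      volume (Z ∩ ball z ρ) * (ENNReal.ofReal (ρ ^ m) * ballVol m) := by
  have hsub : A ∩ ball (mk' z w) ρ ⊆ headTail m ⁻¹' ((Z ∩ ball z ρ) ×ˢ ball w ρ) := by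
    intro x hx
    have hcyl := ball_mk'_subset_preimage_headTail z w ρ hx.2
    exact ⟨⟨hAZ hx, hcyl.1⟩, hcyl.2⟩
  calc volume (A ∩ ball (mk' z w) ρ)
      ≤ volume (headTail m ⁻¹' ((Z ∩ ball z ρ) ×ˢ ball w ρ)) := measure_mono hsub
    _ = volume (Z ∩ ball z ρ) * volume (ball w ρ) := by
      rw [(measurePreserving_headTail m).measure_preimage_equiv, Measure.prod_prod]
    _ = _ := by
      rw [Measure.addHaar_ball_of_pos volume w hρ, finrank_euclideanSpace_fin]
      rfl

lemma densAt_mk'_zero_of_densAtR_zero {m : ℕ} {A : Set (EuclideanSpace ℝ (Fin (m + 1)))}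
    {Z : Set ℝ} {z : ℝ} (w : EuclideanSpace ℝ (Fin m)) (hZ : DensAtR Z z 0) {δ : ℝ}
    (hδ : 0 < δ) (hAZ : A ∩ ball (mk' z w) δ ⊆ {x | x 0 ∈ Z}) :
    DensAt A (mk' z w) 0 := by
  have hC : 2 * ballVol m / ballVol (m + 1) ≠ ⊤ :=
    ENNReal.div_ne_top (ENNReal.mul_ne_top ENNReal.ofNat_ne_top measure_ball_lt_top.ne)
      (measure_ball_pos volume 0 one_pos).ne'
  have hlim := ENNReal.Tendsto.mul_const hZ (Or.inr hC)
  rw [zero_mul] at hlim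
  refine tendsto_of_tendsto_of_tendsto_of_le_of_le' tendsto_const_nhds hlim
    (Eventually.of_forall fun ρ => zero_le) ?_
  filter_upwards [Ioo_mem_nhdsGT hδ] with ρ hρ
  calc volume (A ∩ ball (mk' z w) ρ) / (ballVol (m + 1) * ENNReal.ofReal (ρ ^ (m + 1)))
      ≤ volume (Z ∩ ball z ρ) * (ENNReal.ofReal (ρ ^ m) * ballVol m) /
          (ballVol (m + 1) * ENNReal.ofReal (ρ ^ (m + 1))) := by
        gcongr
        exact volume_inter_ball_mk'_le hρ.1 <|
          (inter_subset_inter_right A (ball_subset_ball hρ.2.le)).trans hAZ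
    _ = volume (Z ∩ ball z ρ) / ENNReal.ofReal (2 * ρ) * (2 * ballVol m / ballVol (m + 1)) :=
      mul_ballVol_div_ballVol_succ_eq m _ hρ.1

theorem densAt_zero_general (m : ℕ) (ℓ : ℝ → ℝ) (zb : ℝ) (w : EuclideanSpace ℝ (Fin m))
    (hw : approxUpper (rad m ℓ) zb < ((‖w‖ : ℝ) : EReal)) :
    DensAt (F m ℓ) (mk' zb w) 0 := by
  obtain ⟨_, ⟨s, hs, rfl⟩, hsw⟩ := sInf_lt_iff.mp hw
  refine densAt_mk'_zero_of_densAtR_zero w hs (sub_pos.2 (EReal.coe_lt_coe_iff.1 hsw)) ?_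
  rintro x ⟨hxF, hxB⟩
  have htail := (ball_mk'_subset_preimage_headTail zb w _ hxB).2
  rw [mem_ball, dist_eq_norm, headTail_apply] at htail
  have hs_lt : s < ‖tailv x‖ := by
    linarith [norm_sub_norm_le w (tailv x), norm_sub_rev w (tailv x)]
  exact hs_lt.trans hxF

/-- points with `|w| > r_ℓ^∨(zb)` have density 0 for `F_ℓ`. -/
theorem densAt_zero (m : ℕ) (hm : 1 ≤ m)
    (ℓ : ℝ → ℝ) (hmeas : Measurable ℓ) (hpos : ∀ z, 0 ≤ ℓ z)
    (hper : HasFinPerim (F m ℓ)) (hvol : volume (F m ℓ) < ⊤)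
    (zb : ℝ) (w : EuclideanSpace ℝ (Fin m))
    (hw : approxUpper (rad m ℓ) zb < ((‖w‖ : ℝ) : EReal)) :
    DensAt (F m ℓ) (mk' zb w) 0 :=
  densAt_zero_general m ℓ zb w hw

end Schwarz
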